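/- arXiv:1802.02869 — 3 statements merged into one kernel-verified Lean document; each statement's English description precedes it below -/
import Mathlib

section
/- Let A and B be self-adjoint positive operators on a finite-dimensional inner product space V of dimension j, with smallest eigenvalues λ_j(A) and λ_j(B). For any real z < λ_j(A), we have λ_j(B) ≥ z if and only if λ₁((A − z)^{−1/2}(A − B)(A − z)^{−1/2}) ≤ 1. -/
open Matrix Pointwise

lemma aux_herm_sub_smul_one {j : ℕ} {M : Matrix (Fin j) (Fin j) ℝ}
    (hM : M.IsHermitian) (z : ℝ) :
    (M - z • (1 : Matrix (Fin j) (Fin j) ℝ)).IsHermitian := by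
  unfold Matrix.IsHermitian
  rw [conjTranspose_sub, conjTranspose_smul, conjTranspose_one, hM.eq]
  norm_num

lemma aux_inf {j : ℕ} (hj : 0 < j) {M : Matrix (Fin j) (Fin j) ℝ}
    (hM : M.IsHermitian) (z : ℝ) :
    z ≤ sInf (spectrum ℝ M) ↔
      (M - z • (1 : Matrix (Fin j) (Fin j) ℝ)).PosSemidef := by
  have : Nonempty (Fin j) := ⟨⟨0, hj⟩⟩
  have hN : (M - z • (1 : Matrix (Fin j) (Fin j) ℝ)).IsHermitian :=
    aux_herm_sub_smul_one hM z
  have halg : (algebraMap ℝ (Matrix (Fin j) (Fin j) ℝ)) z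
      = z • (1 : Matrix (Fin j) (Fin j) ℝ) := Algebra.algebraMap_eq_smul_one z
  have hspecN : spectrum ℝ (M - z • (1 : Matrix (Fin j) (Fin j) ℝ))
      = spectrum ℝ M - ({z} : Set ℝ) := by
    rw [← halg, ← spectrum.sub_singleton_eq]
  have hle : z ≤ sInf (spectrum ℝ M) ↔ ∀ x ∈ spectrum ℝ M, z ≤ x := by
    rw [hM.spectrum_real_eq_range_eigenvalues,
      le_csInf_iff (Set.Finite.bddBelow (Set.finite_range _)) (Set.range_nonempty _)]
  rw [hle]
  constructor
  · intro h
    apply hN.posSemidef_iff_eigenvalues_nonneg.mpr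
    intro i
    have hmem := hN.eigenvalues_mem_spectrum_real i
    rw [hspecN, Set.mem_sub] at hmem
    obtain ⟨x, hx, y, hy, hxy⟩ := hmem
    rw [Set.mem_singleton_iff] at hy
    subst hy
    rw [← hxy]
    have := h x hx
    simp only [Pi.zero_apply]
    linarith
  · intro h x hx
    have hmem : x - z ∈ spectrum ℝ (M - z • (1 : Matrix (Fin j) (Fin j) ℝ)) := by
      rw [hspecN]
      exact Set.sub_mem_sub hx rfl
    rw [hN.spectrum_real_eq_range_eigenvalues] at hmem
    obtain ⟨i, hi⟩ := hmem
    have := h.eigenvalues_nonneg i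
    rw [hi] at this
    linarith

lemma aux_sup {j : ℕ} (hj : 0 < j) {S : Matrix (Fin j) (Fin j) ℝ}
    (hS : S.IsHermitian) :
    sSup (spectrum ℝ S) ≤ 1 ↔
      ((1 : Matrix (Fin j) (Fin j) ℝ) - S).PosSemidef := by
  have : Nonempty (Fin j) := ⟨⟨0, hj⟩⟩
  have hN : ((1 : Matrix (Fin j) (Fin j) ℝ) - S).IsHermitian := by
    unfold Matrix.IsHermitian
    rw [conjTranspose_sub, conjTranspose_one, hS.eq]
  have halg : (algebraMap ℝ (Matrix (Fin j) (Fin j) ℝ)) 1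
      = (1 : Matrix (Fin j) (Fin j) ℝ) := map_one _
  have hspecN : spectrum ℝ ((1 : Matrix (Fin j) (Fin j) ℝ) - S)
      = ({(1 : ℝ)} : Set ℝ) - spectrum ℝ S := by
    rw [← halg, ← spectrum.singleton_sub_eq]
  have hle : sSup (spectrum ℝ S) ≤ 1 ↔ ∀ x ∈ spectrum ℝ S, x ≤ 1 := by
    rw [hS.spectrum_real_eq_range_eigenvalues,
      csSup_le_iff (Set.Finite.bddAbove (Set.finite_range _)) (Set.range_nonempty _)]
  rw [hle]
  constructor
  · intro h
    apply hN.posSemidef_iff_eigenvalues_nonneg.mpr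
    intro i
    have hmem := hN.eigenvalues_mem_spectrum_real i
    rw [hspecN, Set.mem_sub] at hmem
    obtain ⟨x, hx, y, hy, hxy⟩ := hmem
    rw [Set.mem_singleton_iff] at hx
    subst hx
    rw [← hxy]
    have := h y hy
    simp only [Pi.zero_apply]
    linarith
  · intro h x hx
    have hmem : 1 - x ∈ spectrum ℝ ((1 : Matrix (Fin j) (Fin j) ℝ) - S) := by
      rw [hspecN]
      exact Set.sub_mem_sub rfl hx
    rw [hN.spectrum_real_eq_range_eigenvalues] at hmem
    obtain ⟨i, hi⟩ := hmem
    have := h.eigenvalues_nonneg i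
    rw [hi] at this
    linarith

/-- Lemma: for self-adjoint positive operators `A`, `B` on a `j`-dimensional space
(modelled as Hermitian positive-definite matrices) and `z < λ_j(A)` (the smallest
eigenvalue, given as the infimum of the spectrum), `λ_j(B) ≥ z` iff
`λ₁((A−z)^{-1/2} (A−B) (A−z)^{-1/2}) ≤ 1`. Here the Hermitian positive matrix `T`
encodes `(A − z)^{-1/2}`: `T * T * (A − z•1) = 1`. -/
theorem stmt1
    {j : ℕ} (hj : 0 < j) (A B T : Matrix (Fin j) (Fin j) ℝ) (z : ℝ)
    (hA : A.IsHermitian) (hB : B.IsHermitian) (hT : T.IsHermitian)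
    (hApos : A.PosSemidef) (hBpos : B.PosSemidef) (hTpos : T.PosSemidef)
    (hz : z < sInf (spectrum ℝ A))
    (hTdef : T * T * (A - z • (1 : Matrix (Fin j) (Fin j) ℝ)) = 1) :
    z ≤ sInf (spectrum ℝ B) ↔
      sSup (spectrum ℝ (T * (A - B) * T)) ≤ 1 := by
  set M := A - z • (1 : Matrix (Fin j) (Fin j) ℝ) with hMdef
  have hMherm : M.IsHermitian := aux_herm_sub_smul_one hA z
  -- T * M * T = 1
  have h1 : T * (T * M) = 1 := by rw [← mul_assoc]; exact hTdef
  have hTMT : T * M * T = 1 := mul_eq_one_comm.mp h1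
  have hMTT : M * (T * T) = 1 := mul_eq_one_comm.mp hTdef
  -- the congruence identity
  have key : (1 : Matrix (Fin j) (Fin j) ℝ) - T * (A - B) * T
      = T * (B - z • (1 : Matrix (Fin j) (Fin j) ℝ)) * T := by
    have hAB : A - B = M - (B - z • (1 : Matrix (Fin j) (Fin j) ℝ)) := by
      rw [hMdef]; abel
    rw [hAB, ← hTMT]
    noncomm_ring
  -- hermitian-ness of the middle term
  have hSherm : (T * (A - B) * T).IsHermitian := by
    have h := Matrix.isHermitian_conjTranspose_mul_mul T (hA.sub hB)
    rwa [hT.eq] at h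
  rw [aux_inf hj hB z, aux_sup hj hSherm, key]
  constructor
  · intro h
    have h2 := h.conjTranspose_mul_mul_same T
    rwa [hT.eq] at h2
  · intro h
    have h2 := h.conjTranspose_mul_mul_same (M * T)
    have hct : (M * T)ᴴ = T * M := by
      rw [conjTranspose_mul, hT.eq, hMherm.eq]
    rw [hct] at h2
    have e : T * M * (T * (B - z • (1 : Matrix (Fin j) (Fin j) ℝ)) * T) * (M * T)
        = (T * M * T) * (B - z • (1 : Matrix (Fin j) (Fin j) ℝ)) * (T * M * T) := by
      simp only [Matrix.mul_assoc]
    rw [e, hTMT, Matrix.one_mul, Matrix.mul_one] at h2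
    exact h2
end

section
/- Let P and P̂ be orthogonal projections of equal finite rank on a Hilbert space. Then ‖P(P̂ − P)P‖₁ = tr(P − P P̂ P) = ‖P̂ − P‖₂²/2, where ‖·‖₁ is the trace norm and ‖·‖₂ the Hilbert–Schmidt norm. In particular, the operator P − P P̂ P is positive. -/
open scoped RealInnerProductSpace

/-- Squared Hilbert–Schmidt norm `‖T‖₂² = ∑_i ‖T e_i‖²` with respect to a Hilbert basis. -/
noncomputable def hsNormSq {H : Type*} [NormedAddCommGroup H] [InnerProductSpace ℝ H]
    {ι : Type*} (e : ι → H) (T : H →L[ℝ] H) : ℝ :=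
  ∑' i, ‖T (e i)‖ ^ 2

/-- Trace `tr T = ∑_i ⟨e_i, T e_i⟩` with respect to a Hilbert basis. -/
noncomputable def trBasis {H : Type*} [NormedAddCommGroup H] [InnerProductSpace ℝ H]
    {ι : Type*} (e : ι → H) (T : H →L[ℝ] H) : ℝ :=
  ∑' i, ⟪e i, T (e i)⟫

/-- Trace (nuclear) norm, characterised as the supremum of `∑_i |⟨v_i, T w_i⟩|` over finite
orthonormal families `(v_i)`, `(w_i)`. -/
noncomputable def traceNorm {H : Type*} [NormedAddCommGroup H] [InnerProductSpace ℝ H]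
    (T : H →L[ℝ] H) : ℝ :=
  ⨆ n : ℕ, ⨆ p : {p : (Fin n → H) × (Fin n → H) // Orthonormal ℝ p.1 ∧ Orthonormal ℝ p.2},
    ∑ i, |⟪p.1.1 i, T (p.1.2 i)⟫|

/-! Write `P = proj_K` and `P̂ = proj_L` for finite-dimensional subspaces `K`, `L`. Then
`A := P − P P̂ P = P (1 − P̂) P` is a positive operator with range in `K`; diagonalising it on `K`
with eigenvalues `μ_k ≥ 0` gives `‖A‖₁ = ∑ μ_k` (Cauchy–Schwarz and Bessel for the upper bound,
the eigenbasis itself for the lower one) and `tr A = ∑ μ_k`. For the Hilbert–Schmidt norm,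
`(P̂ − P)² = P̂ (1 − P) + P (1 − P̂)`, and for orthonormal bases `(u_k)` of `K` and `(û_j)` of `L`
the traces of the two summands are `dim L − ∑ ⟪u_k, û_j⟫²` and `dim K − ∑ ⟪u_k, û_j⟫²`; the
second one is `tr A`, and equal ranks make the two equal. -/

open ContinuousLinearMap Submodule Module

section TraceNorm

variable {H : Type*} [NormedAddCommGroup H] [InnerProductSpace ℝ H]

lemma traceNorm_neg (T : H →L[ℝ] H) : traceNorm (-T) = traceNorm T := by
  simp only [traceNorm, neg_apply, inner_neg_right, abs_neg]

lemma traceNorm_eq_of_forall_le_of_eq {T : H →L[ℝ] H} {C : ℝ}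
    (hle : ∀ (n : ℕ) (v w : Fin n → H), Orthonormal ℝ v → Orthonormal ℝ w →
      ∑ i, |⟪v i, T (w i)⟫| ≤ C)
    {n : ℕ} {v w : Fin n → H} (hv : Orthonormal ℝ v) (hw : Orthonormal ℝ w)
    (hC : ∑ i, |⟪v i, T (w i)⟫| = C) : traceNorm T = C := by
  have hC0 : 0 ≤ C := hC ▸ Finset.sum_nonneg fun i _ => abs_nonneg _
  have hsup : ∀ m, (⨆ p : {p : (Fin m → H) × (Fin m → H) //
      Orthonormal ℝ p.1 ∧ Orthonormal ℝ p.2}, ∑ i, |⟪p.1.1 i, T (p.1.2 i)⟫|) ≤ C :=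
    fun m => Real.iSup_le (fun p => hle m _ _ p.2.1 p.2.2) hC0
  refine le_antisymm (Real.iSup_le hsup hC0) ?_
  refine le_ciSup_of_le ⟨C, Set.forall_mem_range.2 hsup⟩ n ?_
  exact le_ciSup_of_le ⟨C, Set.forall_mem_range.2 fun p => hle n _ _ p.2.1 p.2.2⟩
    ⟨(v, w), hv, hw⟩ hC.ge

lemma Orthonormal.sum_abs_inner_mul_abs_inner_le {ι : Type*} {v w : ι → H}
    (hv : Orthonormal ℝ v) (hw : Orthonormal ℝ w) (s : Finset ι) (x y : H) :
    ∑ i ∈ s, |⟪v i, x⟫| * |⟪w i, y⟫| ≤ ‖x‖ * ‖y‖ := by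
  have hx := hv.sum_inner_products_le x (s := s)
  have hy := hw.sum_inner_products_le y (s := s)
  have hcs := Finset.sum_mul_sq_le_sq_mul_sq s (fun i => |⟪v i, x⟫|) (fun i => |⟪w i, y⟫|)
  simp only [Real.norm_eq_abs, sq_abs] at hx hy hcs
  refine le_of_pow_le_pow_left₀ two_ne_zero (by positivity) ?_
  calc _ ≤ _ := hcs
    _ ≤ ‖x‖ ^ 2 * ‖y‖ ^ 2 :=
      mul_le_mul hx hy (Finset.sum_nonneg fun i _ => sq_nonneg _) (sq_nonneg _)
    _ = (‖x‖ * ‖y‖) ^ 2 := (mul_pow _ _ _).symm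

variable {n : ℕ} {u : Fin n → H} {μ : Fin n → ℝ} {T : H →L[ℝ] H}

lemma inner_apply_self_of_forall_eq_sum (hu : Orthonormal ℝ u)
    (hT : ∀ x, T x = ∑ k, (μ k * ⟪u k, x⟫) • u k) (j : Fin n) : ⟪u j, T (u j)⟫ = μ j := by
  rw [hT, hu.inner_right_fintype, real_inner_self_eq_norm_sq, hu.1 j, one_pow, mul_one]

lemma traceNorm_of_forall_eq_sum (hu : Orthonormal ℝ u) (hμ : ∀ k, 0 ≤ μ k)
    (hT : ∀ x, T x = ∑ k, (μ k * ⟪u k, x⟫) • u k) : traceNorm T = ∑ k, μ k := by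
  refine traceNorm_eq_of_forall_le_of_eq (fun m v w hv hw => ?_) hu hu ?_
  · calc ∑ i, |⟪v i, T (w i)⟫| = ∑ i, |∑ k, μ k * (⟪u k, w i⟫ * ⟪v i, u k⟫)| := by
          simp only [hT, inner_sum, real_inner_smul_right, mul_assoc]
      _ ≤ ∑ i, ∑ k, μ k * (|⟪u k, w i⟫| * |⟪v i, u k⟫|) := Finset.sum_le_sum fun i _ =>
          (Finset.abs_sum_le_sum_abs _ _).trans_eq <| by simp [abs_mul, abs_of_nonneg (hμ _)]
      _ = ∑ k, μ k * ∑ i, |⟪v i, u k⟫| * |⟪w i, u k⟫| := by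
          rw [Finset.sum_comm]
          simp only [Finset.mul_sum, real_inner_comm (w _) (u _), mul_comm |⟪w _, u _⟫|]
      _ ≤ ∑ k, μ k * (‖u k‖ * ‖u k‖) := Finset.sum_le_sum fun k _ =>
          mul_le_mul_of_nonneg_left (hv.sum_abs_inner_mul_abs_inner_le hw _ _ _) (hμ k)
      _ = ∑ k, μ k := by simp [hu.1]
  · simp [inner_apply_self_of_forall_eq_sum hu hT, abs_of_nonneg (hμ _)]

end TraceNorm

lemma IsIdempotentElem.sub_mul_sub_self {R : Type*} [Ring R] {p q : R} (hp : IsIdempotentElem p)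
    (hq : IsIdempotentElem q) : (q - p) * (q - p) = q * (1 - p) + p * (1 - q) := by
  simp only [mul_sub, sub_mul, mul_one, hp.eq, hq.eq]
  abel

section Trace

variable {H ι κ κ' : Type*} [NormedAddCommGroup H] [InnerProductSpace ℝ H]
  (e : HilbertBasis ι ℝ H) [Fintype κ] [Fintype κ'] {K L : Submodule ℝ H}
  [K.HasOrthogonalProjection] [L.HasOrthogonalProjection]

lemma inner_starProjection_self_eq_sum (c : OrthonormalBasis κ' ℝ L) (x : H) :
    ⟪x, L.starProjection x⟫ = ∑ j, ⟪(c j : H), x⟫ ^ 2 := by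
  simp [c.starProjection_eq_sum_rankOne, inner_sum, real_inner_smul_right, real_inner_comm, sq]

lemma sum_inner_starProjection_comm (b : OrthonormalBasis κ ℝ K) (c : OrthonormalBasis κ' ℝ L) :
    ∑ k, ⟪(b k : H), L.starProjection (b k)⟫ = ∑ j, ⟪(c j : H), K.starProjection (c j)⟫ := by
  simp only [inner_starProjection_self_eq_sum c, inner_starProjection_self_eq_sum b]
  rw [Finset.sum_comm]
  simp only [real_inner_comm]

lemma trBasis_add {S T : H →L[ℝ] H} (hS : Summable fun i => ⟪e i, S (e i)⟫)
    (hT : Summable fun i => ⟪e i, T (e i)⟫) : trBasis e (S + T) = trBasis e S + trBasis e T := by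
  simp only [trBasis, add_apply, inner_add_right]
  exact hS.tsum_add hT

variable [CompleteSpace H]

lemma hsNormSq_eq_trBasis_comp_self {T : H →L[ℝ] H} (hT : IsSelfAdjoint T) :
    hsNormSq e T = trBasis e (T ∘L T) :=
  tsum_congr fun i => by rw [← real_inner_self_eq_norm_sq]; exact hT.isSymmetric _ _

lemma hasSum_inner_starProjection_comp (b : OrthonormalBasis κ ℝ K) (T : H →L[ℝ] H) :
    HasSum (fun i => ⟪e i, (K.starProjection ∘L T) (e i)⟫) (∑ k, ⟪(b k : H), T (b k)⟫) := by
  have hexp : ∀ x, ⟪x, (K.starProjection ∘L T) x⟫ =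
      ∑ k, ⟪(b k : H), x⟫ * ⟪x, adjoint T (b k)⟫ := fun x => by
    rw [comp_apply, ← inner_starProjection_left_eq_right, b.starProjection_eq_sum_rankOne]
    simp [sum_inner, real_inner_smul_right, adjoint_inner_right, real_inner_comm]
  simp only [hexp]
  refine hasSum_sum fun k _ => ?_
  have := e.hasSum_inner_mul_inner (b k : H) (adjoint T (b k))
  rwa [adjoint_inner_right, real_inner_comm] at this

lemma trBasis_starProjection_comp (b : OrthonormalBasis κ ℝ K) (T : H →L[ℝ] H) :
    trBasis e (K.starProjection ∘L T) = ∑ k, ⟪(b k : H), T (b k)⟫ :=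
  (hasSum_inner_starProjection_comp e b T).tsum_eq

lemma trBasis_starProjection_comp_comp_starProjection [FiniteDimensional ℝ K] (T : H →L[ℝ] H) :
    trBasis e (K.starProjection ∘L T ∘L K.starProjection) = trBasis e (K.starProjection ∘L T) := by
  simp only [trBasis_starProjection_comp e (stdOrthonormalBasis ℝ K), comp_apply,
    starProjection_eq_self_iff.mpr (stdOrthonormalBasis ℝ K _).2]

lemma trBasis_starProjection_comp_one_sub (b : OrthonormalBasis κ ℝ K) :
    trBasis e (K.starProjection ∘L (1 - L.starProjection)) =
      finrank ℝ K - ∑ k, ⟪(b k : H), L.starProjection (b k)⟫ := by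
  rw [trBasis_starProjection_comp e b, finrank_eq_card_basis b.toBasis]
  simp [inner_sub_right, Submodule.norm_coe, b.orthonormal.1]

lemma hsNormSq_starProjection_sub [FiniteDimensional ℝ K] [FiniteDimensional ℝ L]
    (h : finrank ℝ K = finrank ℝ L) :
    hsNormSq e (L.starProjection - K.starProjection) =
      2 * trBasis e (K.starProjection ∘L (1 - L.starProjection)) := by
  set b := stdOrthonormalBasis ℝ K
  set c := stdOrthonormalBasis ℝ L
  have hsa : IsSelfAdjoint (L.starProjection - K.starProjection) :=
    (isSelfAdjoint_starProjection L).sub (isSelfAdjoint_starProjection K)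
  have hsq : (L.starProjection - K.starProjection) ∘L (L.starProjection - K.starProjection) =
      L.starProjection ∘L (1 - K.starProjection) + K.starProjection ∘L (1 - L.starProjection) :=
    (isIdempotentElem_starProjection K).sub_mul_sub_self (isIdempotentElem_starProjection L)
  rw [hsNormSq_eq_trBasis_comp_self e hsa, hsq,
    trBasis_add e (hasSum_inner_starProjection_comp e c _).summable
      (hasSum_inner_starProjection_comp e b _).summable,
    trBasis_starProjection_comp_one_sub e b, trBasis_starProjection_comp_one_sub e c,
    sum_inner_starProjection_comm c b, congrArg Nat.cast h.symm]
  ring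

end Trace

section Spectral

variable {H ι : Type*} [NormedAddCommGroup H] [InnerProductSpace ℝ H] [CompleteSpace H]

lemma exists_orthonormalBasis_apply_eq_sum (K : Submodule ℝ H) [FiniteDimensional ℝ K]
    {T : H →L[ℝ] H} (hT : IsSelfAdjoint T) (hTK : ∀ x, T x ∈ K) :
    ∃ (b : OrthonormalBasis (Fin (finrank ℝ K)) ℝ K) (μ : Fin (finrank ℝ K) → ℝ),
      ∀ x, T x = ∑ k, (μ k * ⟪(b k : H), x⟫) • (b k : H) := by
  have hsymm : ∀ y z, ⟪T y, z⟫ = ⟪y, T z⟫ := hT.isSymmetric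
  set S : K →ₗ[ℝ] K := (T : H →ₗ[ℝ] H).restrict fun x _ => hTK x
  have hS : S.IsSymmetric := fun y z => hsymm y z
  refine ⟨hS.eigenvectorBasis rfl, hS.eigenvalues rfl, fun x => ?_⟩
  have hcoef : ∀ k, ⟪hS.eigenvectorBasis rfl k, (⟨T x, hTK x⟩ : K)⟫ =
      hS.eigenvalues rfl k * ⟪(hS.eigenvectorBasis rfl k : H), x⟫ := fun k => by
    rw [coe_inner]
    change ⟪_, T x⟫ = _
    rw [← hsymm]
    have := congrArg Subtype.val (hS.apply_eigenvectorBasis rfl k)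
    simp only [S, LinearMap.coe_restrict_apply, coe_coe, Submodule.coe_smul,
      RCLike.ofReal_real_eq_id, id_eq] at this
    rw [this, real_inner_smul_left]
  have := congrArg Subtype.val ((hS.eigenvectorBasis rfl).sum_repr' ⟨T x, hTK x⟩)
  simpa [hcoef] using this.symm

lemma ContinuousLinearMap.IsPositive.traceNorm_eq_trBasis (e : HilbertBasis ι ℝ H)
    (K : Submodule ℝ H) [FiniteDimensional ℝ K] {T : H →L[ℝ] H} (hT : T.IsPositive) (hTK : ∀ x, T x ∈ K) :
    traceNorm T = trBasis e T := by
  obtain ⟨b, μ, hTb⟩ := exists_orthonormalBasis_apply_eq_sum K hT.isSelfAdjoint hTK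
  have hu : Orthonormal ℝ fun k => (b k : H) := b.orthonormal.comp_linearIsometry K.subtypeₗᵢ
  have hμ := inner_apply_self_of_forall_eq_sum hu hTb
  have hKT : K.starProjection ∘L T = T := ext fun x => starProjection_eq_self_iff.mpr (hTK x)
  calc traceNorm T = ∑ k, μ k :=
        traceNorm_of_forall_eq_sum hu (fun k => hμ k ▸ hT.inner_nonneg_right _) hTb
    _ = trBasis e (K.starProjection ∘L T) := by
        rw [trBasis_starProjection_comp e b]; exact Finset.sum_congr rfl fun k _ => (hμ k).symm
    _ = trBasis e T := by rw [hKT]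

end Spectral

/-- For orthogonal projections `P`, `P̂` of equal finite rank,
`‖P(P̂ − P)P‖₁ = tr(P − P P̂ P) = ‖P̂ − P‖₂²/2`; in particular `P − P P̂ P` is positive. -/
theorem stmt10
    {H : Type*} [NormedAddCommGroup H] [InnerProductSpace ℝ H] [CompleteSpace H]
    {ι : Type*} (e : HilbertBasis ι ℝ H)
    (P Phat : H →L[ℝ] H)
    (hP : IsIdempotentElem P) (hPsa : IsSelfAdjoint P)
    (hPhat : IsIdempotentElem Phat) (hPhatsa : IsSelfAdjoint Phat)
    (hfin : FiniteDimensional ℝ (LinearMap.range (P : H →ₗ[ℝ] H)))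
    (hfinhat : FiniteDimensional ℝ (LinearMap.range (Phat : H →ₗ[ℝ] H)))
    (hrank : Module.finrank ℝ (LinearMap.range (P : H →ₗ[ℝ] H)) =
      Module.finrank ℝ (LinearMap.range (Phat : H →ₗ[ℝ] H))) :
    traceNorm (P ∘L (Phat - P) ∘L P) = trBasis e (P - P ∘L Phat ∘L P) ∧
      trBasis e (P - P ∘L Phat ∘L P) = hsNormSq e (Phat - P) / 2 ∧
      ∀ v : H, 0 ≤ ⟪v, (P - P ∘L Phat ∘L P) v⟫ := by
  obtain ⟨K, _, rfl⟩ := isStarProjection_iff_eq_starProjection.mp ⟨hP, hPsa⟩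
  obtain ⟨L, _, rfl⟩ := isStarProjection_iff_eq_starProjection.mp ⟨hPhat, hPhatsa⟩
  rw [range_starProjection] at hfin hfinhat
  rw [range_starProjection, range_starProjection] at hrank
  set p := K.starProjection
  set q := L.starProjection
  have hp : p * p = p := (isIdempotentElem_starProjection K).eq
  have hA : p - p ∘L q ∘L p = p ∘L (1 - q) ∘L p := by
    change p - p * (q * p) = p * ((1 - q) * p)
    rw [sub_mul, one_mul, mul_sub, hp]
  have hpos : (p - p ∘L q ∘L p).IsPositive := by
    rw [hA, ← starProjection_orthogonal']
    exact IsPositive.conj_starProjection K (isSymmetricProjection_starProjection Lᗮ).isPositive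
  refine ⟨?_, ?_, hpos.inner_nonneg_right⟩
  · have hneg : p ∘L (q - p) ∘L p = -(p - p ∘L q ∘L p) := by
      change p * ((q - p) * p) = -(p - p * (q * p))
      rw [sub_mul, hp, mul_sub, hp, neg_sub]
    rw [hneg, traceNorm_neg]
    exact hpos.traceNorm_eq_trBasis e K fun x => hA ▸ starProjection_apply_mem K _
  · rw [hA, trBasis_starProjection_comp_comp_starProjection, hsNormSq_starProjection_sub e hrank]
    ring
end

section
/- Let Σ, Σ̂ be self-adjoint positive trace-class operators on a separable Hilbert space, with Σ having distinct eigenvalues μ₁ > μ₂ > ... > 0 with multiplicities m_r and spectral projections P_r, and Σ̂ with eigenvalues λ̂₁ ≥ λ̂₂ ≥ .... Let r ≥ 1 and suppose that the empirical eigenvalues satisfy the separation |λ̂_j − μ_r| ≤ |μ_r − μ_s|/2 for all j ∈ I_r and all s ≠ r, where I_r = {j : λ_j = μ_r}, and let P̂_r = ∑_{j∈I_r} û_j ⊗ û_j. Then for every s ≠ r, ‖P̂_r P_s‖₂ ≤ 2 ‖P̂_r E P_s‖₂ / |μ_r − μ_s| with E = Σ̂ − Σ. -/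
/-!
With `b_j = ⟪û_j, P_s x⟫`, we have `P̂_r P_s x = ∑_{j∈I} b_j û_j` and, by the eigen-identity for
`v = P_s x`, `P̂_r E P_s x = ∑_{j∈I} (λ̂_j − μ_s) b_j û_j`. The separation hypothesis and the
triangle inequality give `|λ̂_j − μ_s| ≥ |μ_r − μ_s| / 2`, hence
`(|μ_r − μ_s| / 2)² ‖P̂_r P_s x‖² ≤ ‖P̂_r E P_s x‖²` pointwise; summing over the basis and taking
square roots gives the claim. The reverse pointwise bound with constant `∑_{j∈I} (λ̂_j − μ_s)²`
shows that the two Hilbert–Schmidt series converge together, so no convergence argument is needed.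
-/

open scoped RealInnerProductSpace

theorem mul_tsum_le_tsum_of_le_of_le {ι : Type*} {f g : ι → ℝ} {a K : ℝ}
    (hg : ∀ i, 0 ≤ g i) (hfg : ∀ i, a * f i ≤ g i) (hgf : ∀ i, g i ≤ K * f i) :
    a * ∑' i, f i ≤ ∑' i, g i := by
  by_cases hf : Summable f
  · rw [← tsum_mul_left]
    exact (hf.mul_left a).tsum_le_tsum hfg ((hf.mul_left K).of_nonneg_of_le hg hgf)
  · rw [tsum_eq_zero_of_not_summable hf, mul_zero]
    exact tsum_nonneg hg

theorem Real.sqrt_le_div_of_sq_mul_le {a b c : ℝ} (hc : 0 < c) (h : c ^ 2 * a ≤ b) :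
    √a ≤ √b / c := by
  rw [le_div_iff₀ hc, ← Real.sqrt_sq hc.le, ← Real.sqrt_mul' _ (sq_nonneg c), mul_comm a]
  exact Real.sqrt_le_sqrt h

theorem sq_half_abs_sub_le_sq_sub_of_abs_sub_le {l a b : ℝ} (h : |l - a| ≤ |a - b| / 2) :
    (|a - b| / 2) ^ 2 ≤ (l - b) ^ 2 := by
  rw [← sq_abs (l - b)]
  exact pow_le_pow_left₀ (by positivity) (by linarith [abs_sub_le a l b, abs_sub_comm a l]) 2

section

variable {H : Type*} [NormedAddCommGroup H] [InnerProductSpace ℝ H]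

theorem sqrt_hsNormSq_le_of_sq_mul_norm_le {ι : Type*} (e : ι → H) {A B : H →L[ℝ] H} {c K : ℝ}
    (hc : 0 < c) (hlow : ∀ x, c ^ 2 * ‖A x‖ ^ 2 ≤ ‖B x‖ ^ 2)
    (hup : ∀ x, ‖B x‖ ^ 2 ≤ K * ‖A x‖ ^ 2) :
    √(hsNormSq e A) ≤ √(hsNormSq e B) / c :=
  Real.sqrt_le_div_of_sq_mul_le hc <|
    mul_tsum_le_tsum_of_le_of_le (fun _ => sq_nonneg _) (fun i => hlow (e i)) (fun i => hup (e i))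

theorem Orthonormal.norm_sum_smul_sq {ι : Type*} {u : ι → H} (hu : Orthonormal ℝ u)
    (I : Finset ι) (c : ι → ℝ) : ‖∑ j ∈ I, c j • u j‖ ^ 2 = ∑ j ∈ I, c j ^ 2 := by
  rw [← real_inner_self_eq_norm_sq, hu.inner_sum c c I]
  simp only [conj_trivial, sq]

theorem Orthonormal.norm_sum_smulRight_apply_sq {ι : Type*} {u : ι → H}
    (hu : Orthonormal ℝ u) (I : Finset ι) (x : H) :
    ‖(∑ j ∈ I, (innerSL ℝ (u j)).smulRight (u j)) x‖ ^ 2 = ∑ j ∈ I, ⟪u j, x⟫ ^ 2 := by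
  simp only [sum_apply, ContinuousLinearMap.smulRight_apply, innerSL_apply_apply,
    hu.norm_sum_smul_sq]

theorem inner_sub_apply_of_eigen {S T : H →L[ℝ] H} (hT : (T : H →ₗ[ℝ] H).IsSymmetric)
    {u v : H} {l m : ℝ} (hu : T u = l • u) (hv : S v = m • v) :
    ⟪u, (T - S) v⟫ = (l - m) * ⟪u, v⟫ := by
  rw [sub_apply, inner_sub_right, ← ContinuousLinearMap.coe_coe T, ← hT,
    ContinuousLinearMap.coe_coe, hu, hv, real_inner_smul_left, real_inner_smul_right, sub_mul]

theorem Orthonormal.norm_sum_smulRight_apply_sub_sq {ι : Type*} {u : ι → H}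
    (hu : Orthonormal ℝ u) (I : Finset ι) {S T : H →L[ℝ] H} (hT : (T : H →ₗ[ℝ] H).IsSymmetric)
    {l : ι → ℝ} (hTu : ∀ j ∈ I, T (u j) = l j • u j) {v : H} {m : ℝ} (hv : S v = m • v) :
    ‖(∑ j ∈ I, (innerSL ℝ (u j)).smulRight (u j)) ((T - S) v)‖ ^ 2 =
      ∑ j ∈ I, (l j - m) ^ 2 * ⟪u j, v⟫ ^ 2 := by
  rw [hu.norm_sum_smulRight_apply_sq]
  refine Finset.sum_congr rfl fun j hj => ?_
  rw [inner_sub_apply_of_eigen hT (hTu j hj) hv, mul_pow]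

end

theorem stmt14_general
    {H : Type*} [NormedAddCommGroup H] [InnerProductSpace ℝ H] [CompleteSpace H]
    {ι : Type*} (e : HilbertBasis ι ℝ H)
    (Sig Sighat : H →L[ℝ] H)
    (hSAhat : IsSelfAdjoint Sighat)
    (I : Finset ℕ) (uhat : ℕ → H) (lamhat : ℕ → ℝ)
    (huhat : Orthonormal ℝ uhat)
    (heighat : ∀ j ∈ I, Sighat (uhat j) = lamhat j • uhat j)
    (mur mus : ℝ) (hne : mur ≠ mus)
    (Ps : H →L[ℝ] H)
    (hPseig : Sig ∘L Ps = mus • Ps)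
    (hsep : ∀ j ∈ I, |lamhat j - mur| ≤ |mur - mus| / 2)
    (Phatr : H →L[ℝ] H)
    (hPhatr : Phatr = ∑ j ∈ I, (innerSL ℝ (uhat j)).smulRight (uhat j)) :
    Real.sqrt (hsNormSq e (Phatr ∘L Ps)) ≤
      2 * Real.sqrt (hsNormSq e (Phatr ∘L (Sighat - Sig) ∘L Ps)) / |mur - mus| := by
  subst hPhatr
  have hA (x : H) := huhat.norm_sum_smulRight_apply_sq I (Ps x)
  have hB (x : H) := huhat.norm_sum_smulRight_apply_sub_sq I hSAhat.isSymmetric heighat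
    (show Sig (Ps x) = mus • Ps x from congr($hPseig x))
  rw [mul_comm 2, ← div_div_eq_mul_div]
  refine sqrt_hsNormSq_le_of_sq_mul_norm_le e (half_pos (abs_pos.mpr (sub_ne_zero.mpr hne)))
    (K := ∑ j ∈ I, (lamhat j - mus) ^ 2) (fun x => ?_) (fun x => ?_) <;>
    simp only [ContinuousLinearMap.comp_apply, hA, hB, Finset.mul_sum]
  · exact Finset.sum_le_sum fun j hj => mul_le_mul_of_nonneg_right
      (sq_half_abs_sub_le_sq_sub_of_abs_sub_le (hsep j hj)) (sq_nonneg _)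
  · refine Finset.sum_le_sum fun j hj => mul_le_mul_of_nonneg_right ?_ (sq_nonneg _)
    exact Finset.single_le_sum (fun k _ => sq_nonneg (lamhat k - mus)) hj

/-- Lemma: if the empirical eigenvalues `λ̂_j`, `j ∈ I_r`, of `Σ̂` (with orthonormal
eigenvectors `û_j` spanning the range of `P̂_r = ∑_{j∈I_r} û_j ⊗ û_j`) satisfy the
separation `|λ̂_j − μ_r| ≤ |μ_r − μ_s|/2`, where `P_s` is the spectral projection of `Σ`
for the eigenvalue `μ_s ≠ μ_r`, then
`‖P̂_r P_s‖₂ ≤ 2 ‖P̂_r E P_s‖₂ / |μ_r − μ_s|` with `E = Σ̂ − Σ`. -/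
theorem stmt14
    {H : Type*} [NormedAddCommGroup H] [InnerProductSpace ℝ H] [CompleteSpace H]
    {ι : Type*} (e : HilbertBasis ι ℝ H)
    (Sig Sighat : H →L[ℝ] H)
    (hSA : IsSelfAdjoint Sig) (hSAhat : IsSelfAdjoint Sighat)
    (hpos : ∀ v : H, 0 ≤ ⟪v, Sig v⟫) (hposhat : ∀ v : H, 0 ≤ ⟪v, Sighat v⟫)
    (I : Finset ℕ) (uhat : ℕ → H) (lamhat : ℕ → ℝ)
    (huhat : Orthonormal ℝ uhat)
    (heighat : ∀ j ∈ I, Sighat (uhat j) = lamhat j • uhat j)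
    (mur mus : ℝ) (hne : mur ≠ mus)
    (Ps : H →L[ℝ] H) (hPs : IsSelfAdjoint Ps) (hPsidem : IsIdempotentElem Ps)
    (hPseig : Sig ∘L Ps = mus • Ps)
    (hsep : ∀ j ∈ I, |lamhat j - mur| ≤ |mur - mus| / 2)
    (Phatr : H →L[ℝ] H)
    (hPhatr : Phatr = ∑ j ∈ I, (innerSL ℝ (uhat j)).smulRight (uhat j)) :
    Real.sqrt (hsNormSq e (Phatr ∘L Ps)) ≤
      2 * Real.sqrt (hsNormSq e (Phatr ∘L (Sighat - Sig) ∘L Ps)) / |mur - mus| :=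
  stmt14_general e Sig Sighat hSAhat I uhat lamhat huhat heighat mur mus hne Ps hPseig hsep Phatr
    hPhatr
end
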